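/- Fix c > 0. For a smooth scalar function u on ℝ×ℝ³, at points (t,x) with t > 0 and x ≠ 0 set D⁻u = (1/2)(∂_t u − c ∂_r u), where ∂_r = (x/|x|)·∇_x, and let Y⁻ = (1, −x₁/(c r), −x₂/(c r), −x₃/(c r)) ∈ ℝ⁴ with r = |x|. Then there is a constant C depending only on c such that for each 0 ≤ a ≤ 3 and all such (t,x), |∂_a u(t,x) − Y⁻_a · D⁻u(t,x)| ≤ C⟨r⟩^{−1} |Γu(t,x)| + C(⟨ct−r⟩/(t+r)) |∂u(t,x)|, where |Γu| = Σ over the eight fields Γ of |Γ_i u|. -/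

import Mathlib

open MeasureTheory Real Finset

noncomputable section

/-- Points of space-time `ℝ×ℝ³`, written `X = (x₀,x₁,x₂,x₃)` with `x₀ = t`. -/
abbrev Pt : Type := Fin 4 → ℝ
/-- Points of space `ℝ³`. -/
abbrev Sp : Type := Fin 3 → ℝ

/-- Space-time partial derivative `∂_a`. -/
def pd (a : Fin 4) (u : Pt → ℝ) : Pt → ℝ := fun X => fderiv ℝ u X (Pi.single a 1)

/-- Rotation field `Ω_{ij} = x_i ∂_j - x_j ∂_i` (space-time indices). -/
def rot (i j : Fin 4) (u : Pt → ℝ) : Pt → ℝ := fun X => X i * pd j u X - X j * pd i u X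

/-- Scaling field `S = t ∂_t + x·∇_x = x^a ∂_a`. -/
def scal (u : Pt → ℝ) : Pt → ℝ := fun X => ∑ a, X a * pd a u X

/-- The eight vector fields `Γ = (∂, Ω, S)`. -/
def Gam : Fin 8 → (Pt → ℝ) → Pt → ℝ :=
  ![pd 0, pd 1, pd 2, pd 3, rot 1 2, rot 1 3, rot 2 3, scal]

/-- `Γ^α` for a multi-index `α` (a word in the eight fields) of length `m`. -/
def GamComp : ∀ {m : ℕ}, (Fin m → Fin 8) → (Pt → ℝ) → Pt → ℝ
  | 0, _, u => u
  | _ + 1, α, u => Gam (α 0) (GamComp (fun i => α i.succ) u)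

/-- Euclidean length `r = |x|` of a spatial point. -/
def rad (x : Sp) : ℝ := Real.sqrt (∑ i, (x i) ^ 2)

/-- Japanese bracket `⟨z⟩ = (1+z²)^{1/2}`. -/
def jb (z : ℝ) : ℝ := Real.sqrt (1 + z ^ 2)

/-- Euclidean norm `|∂u|` of the space-time gradient. -/
def gradNorm (u : Pt → ℝ) (X : Pt) : ℝ := Real.sqrt (∑ a, (pd a u X) ^ 2)

/-- The unit-speed d'Alembertian `□ = ∂_t² - Δ_x`. -/
def box1 (u : Pt → ℝ) : Pt → ℝ := fun X =>
  pd 0 (pd 0 u) X - ∑ j : Fin 3, pd j.succ (pd j.succ u) X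

/-- The d'Alembertian `∂_t² - c²Δ_x` with speed `c`. -/
def boxc (c : ℝ) (u : Pt → ℝ) : Pt → ℝ := fun X =>
  pd 0 (pd 0 u) X - c ^ 2 * ∑ j : Fin 3, pd j.succ (pd j.succ u) X


/- ===== Auxiliary lemmas ===== -/

lemma jb_pos' (z : ℝ) : 0 < jb z := Real.sqrt_pos.2 (by positivity)

lemma one_le_jb' (z : ℝ) : 1 ≤ jb z := by
  have : Real.sqrt 1 ≤ Real.sqrt (1 + z^2) := Real.sqrt_le_sqrt (by nlinarith [sq_nonneg z])
  simpa [jb] using this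

lemma abs_le_jb' (z : ℝ) : |z| ≤ jb z := by
  rw [jb, ← Real.sqrt_sq_eq_abs]
  exact Real.sqrt_le_sqrt (by nlinarith)

lemma jb_le' (z : ℝ) : jb z ≤ 1 + |z| := by
  have h : (0:ℝ) ≤ 1 + |z| := by positivity
  have := Real.sqrt_le_sqrt (show 1 + z^2 ≤ (1+|z|)^2 by nlinarith [abs_nonneg z, sq_abs z])
  rw [Real.sqrt_sq h] at this
  simpa [jb] using this

lemma abs_le_of_sq' (a b : ℝ) (h : a^2 ≤ b^2) (hb : 0 ≤ b) : |a| ≤ b := by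
  nlinarith [abs_nonneg a, sq_abs a]

/-- Core estimate on `E = p0 + c*d`. -/
lemma coreE' (c t r d p0 G gN : ℝ)
    (hc : 0 < c) (ht : 0 < t) (hr : 0 < r)
    (hS : |t*p0 + r*d| ≤ G) (h0 : |p0| ≤ gN) (hd : |d| ≤ gN) (hG0 : 0 ≤ G) :
    |p0 + c*d| ≤ ((4*c+4)/min c 1) * ((jb r)⁻¹ * G)
      + ((4*c+4)/min c 1) * ((jb (c*t-r)/(t+r)) * gN) := by
  have hgN0 : 0 ≤ gN := (abs_nonneg _).trans h0
  set m := min c 1 with hm_def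
  have hm : 0 < m := lt_min hc one_pos
  have hmc : m ≤ c := min_le_left _ _
  have hm1 : m ≤ 1 := min_le_right _ _
  have htr : 0 < t + r := by linarith
  set J : ℝ := (jb r)⁻¹ with hJ_def
  have hJpos : 0 < J := inv_pos.2 (jb_pos' r)
  set Q : ℝ := jb (c*t-r)/(t+r) with hQ_def
  have hjv1 : 1 ≤ jb (c*t-r) := one_le_jb' _
  have hQpos : 0 < Q := div_pos (jb_pos' _) htr
  have hJG0 : 0 ≤ J*G := mul_nonneg hJpos.le hG0
  have hQg0 : 0 ≤ Q*gN := mul_nonneg hQpos.le hgN0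
  have hjvQ : jb (c*t-r) = (t+r)*Q := by rw [hQ_def]; field_simp
  have hSclaim : |t*p0 + r*d| ≤ 2*(t+r)*(J*G) + (t+r)*(Q*gN) := by
    rcases le_or_gt 1 (t+r) with h | h
    · have hjb2 : jb r ≤ 2*(t+r) := by
        have := jb_le' r
        rw [abs_of_pos hr] at this
        linarith
      have h1le : 1 ≤ 2*(t+r)*J := by
        have e1 : J * jb r = 1 := inv_mul_cancel₀ (ne_of_gt (jb_pos' r))
        have := mul_le_mul_of_nonneg_left hjb2 hJpos.le
        linarith
      have := le_mul_of_one_le_left hG0 h1le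
      have h2 : 0 ≤ (t+r)*(Q*gN) := mul_nonneg htr.le hQg0
      have h3 : 2*(t+r)*J*G = 2*(t+r)*(J*G) := by ring
      linarith [hS]
    · have hb : |t*p0 + r*d| ≤ (t+r)*gN := by
        calc |t*p0 + r*d| ≤ |t*p0| + |r*d| := abs_add_le _ _
          _ = t*|p0| + r*|d| := by rw [abs_mul, abs_mul, abs_of_pos ht, abs_of_pos hr]
          _ ≤ (t+r)*gN := by
              have := mul_le_mul_of_nonneg_left h0 ht.le
              have := mul_le_mul_of_nonneg_left hd hr.le
              linarith
      have hQ1 : 1 ≤ Q := by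
        rw [hQ_def, le_div_iff₀ htr]
        linarith
      have h5 : (t+r)*gN ≤ (t+r)*(Q*gN) :=
        mul_le_mul_of_nonneg_left (le_mul_of_one_le_left hgN0 hQ1) htr.le
      have h6 : 0 ≤ 2*(t+r)*(J*G) := by positivity
      linarith
  have hctr : 0 < c*t + r := by positivity
  have hnum : (c*t+r)*|p0 + c*d| ≤ 2*c*|t*p0 + r*d| + (t+r)*Q*((c+1)*gN) := by
    have e1 : (c*t+r)*|p0 + c*d| = |(c*t+r)*(p0 + c*d)| := by
      rw [abs_mul, abs_of_pos hctr]
    have e5 : |c*d - p0| ≤ (c+1)*gN := by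
      calc |c*d - p0| ≤ |c*d| + |p0| := abs_sub _ _
        _ = c*|d| + |p0| := by rw [abs_mul, abs_of_pos hc]
        _ ≤ (c+1)*gN := by
            have := mul_le_mul_of_nonneg_left hd hc.le
            linarith
    have e6 : |c*t-r| ≤ (t+r)*Q := hjvQ ▸ abs_le_jb' _
    calc (c*t+r)*|p0 + c*d| = |2*c*(t*p0 + r*d) + (c*t-r)*(c*d - p0)| := by
          rw [e1]; ring_nf
      _ ≤ |2*c*(t*p0 + r*d)| + |(c*t-r)*(c*d - p0)| := abs_add_le _ _
      _ = 2*c*|t*p0 + r*d| + |c*t-r| * |c*d - p0| := by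
          rw [abs_mul (c*t-r), abs_mul (2*c), abs_of_pos (show (0:ℝ) < 2*c by positivity)]
      _ ≤ 2*c*|t*p0 + r*d| + (t+r)*Q*((c+1)*gN) := by
          have := mul_le_mul e6 e5 (abs_nonneg _) (by positivity)
          linarith
  have hmtr : m*(t+r) ≤ c*t + r := by
    have h1 := mul_le_mul_of_nonneg_right hmc ht.le
    have h2 := mul_le_mul_of_nonneg_right hm1 hr.le
    nlinarith
  rw [div_mul_eq_mul_div, div_mul_eq_mul_div, ← add_div, le_div_iff₀ hm]
  have hF1 : (c*t+r)*|p0 + c*d| ≤ (t+r)*(4*c*(J*G) + (3*c+1)*(Q*gN)) := by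
    have h1 := mul_le_mul_of_nonneg_left hSclaim (by positivity : (0:ℝ) ≤ 2*c)
    have h2 : 2*c*(2*(t+r)*(J*G) + (t+r)*(Q*gN)) + (t+r)*Q*((c+1)*gN)
        = (t+r)*(4*c*(J*G) + (3*c+1)*(Q*gN)) := by ring
    linarith
  have s2 : (t+r)*(m*|p0 + c*d|) ≤ (t+r)*(4*c*(J*G) + (3*c+1)*(Q*gN)) := by
    have s1 := mul_le_mul_of_nonneg_right hmtr (abs_nonneg (p0 + c*d))
    calc (t+r)*(m*|p0 + c*d|) = m*(t+r)*|p0 + c*d| := by ring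
      _ ≤ (c*t+r)*|p0 + c*d| := s1
      _ ≤ _ := hF1
  have s3 : m*|p0 + c*d| ≤ 4*c*(J*G) + (3*c+1)*(Q*gN) := le_of_mul_le_mul_left s2 htr
  have g1 : 4*c*(J*G) ≤ (4*c+4)*(J*G) :=
    mul_le_mul_of_nonneg_right (by linarith) hJG0
  have g2 : (3*c+1)*(Q*gN) ≤ (4*c+4)*(Q*gN) :=
    mul_le_mul_of_nonneg_right (by linarith) hQg0
  linarith

/-- The constant. -/
def Cst (c : ℝ) : ℝ := 4 + 4/c + (4*c+4)/min c 1 + ((4*c+4)/min c 1)/c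

lemma Cst_pos {c : ℝ} (hc : 0 < c) : 0 < Cst c := by
  have hm : 0 < min c 1 := lt_min hc one_pos
  have h1 : 0 ≤ 4/c := by positivity
  have h2 : 0 ≤ (4*c+4)/min c 1 := by positivity
  have h3 : 0 ≤ ((4*c+4)/min c 1)/c := by positivity
  unfold Cst; linarith

lemma core0' (c t r d p0 G gN : ℝ)
    (hc : 0 < c) (ht : 0 < t) (hr : 0 < r)
    (hS : |t*p0 + r*d| ≤ G) (h0 : |p0| ≤ gN) (hd : |d| ≤ gN) (hG0 : 0 ≤ G) :
    |p0 - (1/2)*(p0 - c*d)| ≤ Cst c * ((jb r)⁻¹ * G)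
      + Cst c * ((jb (c*t-r)/(t+r)) * gN) := by
  have hgN0 : 0 ≤ gN := (abs_nonneg _).trans h0
  have hE := coreE' c t r d p0 G gN hc ht hr hS h0 hd hG0
  have hm : 0 < min c 1 := lt_min hc one_pos
  have hK0 : 0 ≤ (4*c+4)/min c 1 := by positivity
  have hKC : (4*c+4)/min c 1 ≤ Cst c := by
    have h1 : 0 ≤ 4/c := by positivity
    have h3 : 0 ≤ ((4*c+4)/min c 1)/c := by positivity
    unfold Cst; linarith
  have hJG0 : 0 ≤ (jb r)⁻¹ * G := mul_nonneg (inv_nonneg.2 (jb_pos' r).le) hG0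
  have hQg0 : 0 ≤ (jb (c*t-r)/(t+r)) * gN :=
    mul_nonneg (div_nonneg (jb_pos' _).le (by linarith)) hgN0
  have e : p0 - (1/2)*(p0 - c*d) = (1/2)*(p0 + c*d) := by ring
  rw [e, abs_mul, abs_of_pos (show (0:ℝ) < 1/2 by norm_num)]
  have g1 := mul_le_mul_of_nonneg_right hKC hJG0
  have g2 := mul_le_mul_of_nonneg_right hKC hQg0
  have h := abs_nonneg (p0 + c*d)
  linarith

lemma coreA' (c t r d p0 y q RA RB sA sB G gN : ℝ)
    (hc : 0 < c) (ht : 0 < t) (hr : 0 < r)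
    (hS : |t*p0 + r*d| ≤ G) (h0 : |p0| ≤ gN) (hd : |d| ≤ gN) (hG0 : 0 ≤ G)
    (hy : |y| ≤ r)
    (hid : r^2 * (q - (y/r)*d) = sA * RA + sB * RB)
    (hRA : |RA| ≤ G) (hRB : |RB| ≤ G) (hsA : |sA| ≤ r) (hsB : |sB| ≤ r)
    (hq : |q| ≤ gN) :
    |q + (y/(c*r))*((1/2)*(p0 - c*d))| ≤ Cst c * ((jb r)⁻¹ * G)
      + Cst c * ((jb (c*t-r)/(t+r)) * gN) := by
  have hgN0 : 0 ≤ gN := (abs_nonneg _).trans h0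
  have hm : 0 < min c 1 := lt_min hc one_pos
  set K := (4*c+4)/min c 1 with hK_def
  have hK0 : 0 ≤ K := by positivity
  have htr : 0 < t + r := by linarith
  set J : ℝ := (jb r)⁻¹ with hJ_def
  have hJpos : 0 < J := inv_pos.2 (jb_pos' r)
  set Q : ℝ := jb (c*t-r)/(t+r) with hQ_def
  have hjv1 : 1 ≤ jb (c*t-r) := one_le_jb' _
  have hQpos : 0 < Q := div_pos (jb_pos' _) htr
  have hJG0 : 0 ≤ J*G := mul_nonneg hJpos.le hG0
  have hQg0 : 0 ≤ Q*gN := mul_nonneg hQpos.le hgN0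
  set A := q - (y/r)*d with hA_def
  have hrA : r*|A| ≤ 2*G := by
    have h1 : |sA * RA + sB * RB| ≤ 2*(r*G) := by
      calc |sA * RA + sB * RB| ≤ |sA| * |RA| + |sB| * |RB| := by
            refine (abs_add_le _ _).trans ?_
            rw [abs_mul, abs_mul]
      _ ≤ r*G + r*G := by
            have := mul_le_mul hsA hRA (abs_nonneg _) hr.le
            have := mul_le_mul hsB hRB (abs_nonneg _) hr.le
            linarith
      _ = 2*(r*G) := by ring
    have h2 : r^2*|A| = |sA * RA + sB * RB| := by
      rw [← hid, abs_mul, abs_of_pos (show (0:ℝ) < r^2 by positivity)]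
    have h3 : r*(r*|A|) ≤ r*(2*G) := by
      calc r*(r*|A|) = r^2*|A| := by ring
        _ ≤ 2*(r*G) := h2 ▸ h1
        _ = r*(2*G) := by ring
    exact le_of_mul_le_mul_left h3 hr
  have hyr : |y/r| ≤ 1 := by
    rw [abs_div, abs_of_pos hr, div_le_one hr]; exact hy
  have hA2 : |A| ≤ 2*gN := by
    calc |A| ≤ |q| + |y/r| * |d| := by
          rw [hA_def]
          refine (abs_sub _ _).trans ?_
          rw [abs_mul]
      _ ≤ gN + 1*gN := by
          have := mul_le_mul hyr hd (abs_nonneg _) zero_le_one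
          linarith
      _ = 2*gN := by ring
  have hAmaster : |A| ≤ 4*(J*G) + (2+4/c)*(Q*gN) := by
    rcases le_or_gt 1 r with h | h
    · have hjb2r : jb r ≤ 2*r := by
        have := jb_le' r
        rw [abs_of_pos hr] at this
        linarith
      have e : (4:ℝ)*(J*G) = 4*G/(jb r) := by rw [hJ_def]; ring
      have key : |A| ≤ 4*(J*G) := by
        rw [e, le_div_iff₀ (jb_pos' r)]
        have h4 := mul_le_mul_of_nonneg_left hjb2r (abs_nonneg A)
        linarith [hrA, h4]
      linarith [mul_nonneg (show (0:ℝ) ≤ 2+4/c by positivity) hQg0]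
    · have habs : c*t - r ≤ jb (c*t-r) := (le_abs_self _).trans (abs_le_jb' _)
      have hcjb : c*1 ≤ c*(jb (c*t-r)) := mul_le_mul_of_nonneg_left hjv1 hc.le
      have hcr : c*r ≤ c*1 := mul_le_mul_of_nonneg_left h.le hc.le
      have hkey : 2*c*(t+r) ≤ (2*c+4)*(jb (c*t-r)) := by linarith
      have h2g : 2*gN ≤ (2+4/c)*(Q*gN) := by
        have e : (2+4/c)*(Q*gN) = ((2*c+4)*(jb (c*t-r))*gN)/(c*(t+r)) := by
          rw [hQ_def]; field_simp
        rw [e, le_div_iff₀ (by positivity)]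
        have := mul_le_mul_of_nonneg_right hkey hgN0
        linarith
      linarith [mul_nonneg (show (0:ℝ) ≤ 4 by norm_num) hJG0]
  have hE := coreE' c t r d p0 G gN hc ht hr hS h0 hd hG0
  rw [← hJ_def, ← hQ_def, ← hK_def] at hE
  have hTid : q + (y/(c*r))*((1/2)*(p0 - c*d)) = A + (y/(2*c*r))*(p0 + c*d) := by
    rw [hA_def]; field_simp; ring
  have habsy : |y/(2*c*r)| ≤ 1/(2*c) := by
    rw [abs_div, abs_of_pos (show (0:ℝ) < 2*c*r by positivity),
      div_le_div_iff₀ (by positivity) (by positivity)]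
    have := mul_le_mul_of_nonneg_right hy (show (0:ℝ) ≤ 2*c by positivity)
    linarith
  have hT : |q + (y/(c*r))*((1/2)*(p0 - c*d))| ≤ |A| + (1/(2*c))*|p0 + c*d| := by
    rw [hTid]
    refine (abs_add_le _ _).trans ?_
    rw [abs_mul]
    have := mul_le_mul_of_nonneg_right habsy (abs_nonneg (p0 + c*d))
    linarith
  have hhalfE : (1/(2*c))*|p0 + c*d| ≤ (K/c)*(J*G) + (K/c)*(Q*gN) := by
    have h1 := mul_le_mul_of_nonneg_left hE (show (0:ℝ) ≤ 1/(2*c) by positivity)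
    have h2 : (1/(2*c))*(K*(J*G) + K*(Q*gN)) = (K/(2*c))*(J*G) + (K/(2*c))*(Q*gN) := by
      field_simp
    have h3 : K/(2*c) ≤ K/c := by
      apply div_le_div_of_nonneg_left hK0 hc; linarith
    have g1 := mul_le_mul_of_nonneg_right h3 hJG0
    have g2 := mul_le_mul_of_nonneg_right h3 hQg0
    linarith
  have hC1 : 4 + K/c ≤ Cst c := by
    have h1 : 0 ≤ 4/c := by positivity
    unfold Cst; rw [← hK_def]; linarith
  have hC2 : (2+4/c) + K/c ≤ Cst c := by
    unfold Cst; rw [← hK_def]; linarith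
  have g1 := mul_le_mul_of_nonneg_right hC1 hJG0
  have g2 := mul_le_mul_of_nonneg_right hC2 hQg0
  linarith [hT, hAmaster, hhalfE, g1, g2]

/-- Bridging lemma: the statement for abstract values of the derivatives. -/
lemma bridge (c t r : ℝ) (xv : Fin 3 → ℝ) (p : Fin 4 → ℝ) (G gN : ℝ)
    (hc : 0 < c) (ht : 0 < t) (hr : 0 < r)
    (hr2 : xv 0^2 + xv 1^2 + xv 2^2 = r^2)
    (hS : |t * p 0 + (xv 0 * p 1 + xv 1 * p 2 + xv 2 * p 3)| ≤ G)
    (h01 : |xv 0 * p 2 - xv 1 * p 1| ≤ G)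
    (h02 : |xv 0 * p 3 - xv 2 * p 1| ≤ G)
    (h12 : |xv 1 * p 3 - xv 2 * p 2| ≤ G)
    (hG0 : 0 ≤ G)
    (hp : ∀ b, |p b| ≤ gN)
    (hsq : p 1^2 + p 2^2 + p 3^2 ≤ gN^2)
    (a : Fin 4) :
    |p a - (Fin.cons 1 (fun j : Fin 3 => -(xv j) / (c * r)) : Fin 4 → ℝ) a *
        ((1/2) * (p 0 - c * ∑ j : Fin 3, (xv j / r) * p j.succ))|
      ≤ Cst c * (jb r)⁻¹ * G + Cst c * (jb (c*t - r)/(t+r)) * gN := by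
  have hgN0 : 0 ≤ gN := (abs_nonneg _).trans (hp 0)
  have hDsum : ∑ j : Fin 3, (xv j / r) * p j.succ
      = (xv 0 * p 1 + xv 1 * p 2 + xv 2 * p 3) / r := by
    rw [Fin.sum_univ_three,
      show ((0:Fin 3).succ) = (1:Fin 4) from rfl, show ((1:Fin 3).succ) = (2:Fin 4) from rfl,
      show ((2:Fin 3).succ) = (3:Fin 4) from rfl]
    ring
  have hw : |xv 0 * p 1 + xv 1 * p 2 + xv 2 * p 3| ≤ r * gN := by
    apply abs_le_of_sq' _ _ _ (by positivity)
    have hcs : (xv 0 * p 1 + xv 1 * p 2 + xv 2 * p 3)^2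
        ≤ (xv 0^2 + xv 1^2 + xv 2^2) * (p 1^2 + p 2^2 + p 3^2) := by
      nlinarith [sq_nonneg (xv 0 * p 2 - xv 1 * p 1), sq_nonneg (xv 0 * p 3 - xv 2 * p 1),
        sq_nonneg (xv 1 * p 3 - xv 2 * p 2)]
    rw [hr2] at hcs
    have := mul_le_mul_of_nonneg_left hsq (sq_nonneg r)
    nlinarith
  have hd : |(xv 0 * p 1 + xv 1 * p 2 + xv 2 * p 3)/r| ≤ gN := by
    rw [abs_div, abs_of_pos hr, div_le_iff₀ hr]
    linarith
  have hSd : |t * p 0 + r * ((xv 0 * p 1 + xv 1 * p 2 + xv 2 * p 3)/r)| ≤ G := by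
    rw [mul_comm r, div_mul_cancel₀ _ (ne_of_gt hr)]
    exact hS
  have hx0 : |xv 0| ≤ r := abs_le_of_sq' _ _ (by nlinarith [sq_nonneg (xv 1), sq_nonneg (xv 2)]) hr.le
  have hx1 : |xv 1| ≤ r := abs_le_of_sq' _ _ (by nlinarith [sq_nonneg (xv 0), sq_nonneg (xv 2)]) hr.le
  have hx2 : |xv 2| ≤ r := abs_le_of_sq' _ _ (by nlinarith [sq_nonneg (xv 0), sq_nonneg (xv 1)]) hr.le
  rw [hDsum]
  set w := xv 0 * p 1 + xv 1 * p 2 + xv 2 * p 3 with hw_def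
  fin_cases a
  · show |p 0 - 1 * ((1/2) * (p 0 - c * (w/r)))| ≤ _
    rw [one_mul]
    have := core0' c t r (w/r) (p 0) G gN hc ht hr hSd (hp 0) hd hG0
    calc |p 0 - (1/2) * (p 0 - c * (w/r))| ≤ Cst c * ((jb r)⁻¹ * G)
          + Cst c * ((jb (c*t - r)/(t+r)) * gN) := this
      _ = Cst c * (jb r)⁻¹ * G + Cst c * (jb (c*t - r)/(t+r)) * gN := by ring
  · show |p 1 - (-(xv 0) / (c * r)) * ((1/2) * (p 0 - c * (w/r)))| ≤ _
    rw [show p 1 - (-(xv 0) / (c * r)) * ((1/2) * (p 0 - c * (w/r)))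
        = p 1 + (xv 0/(c*r)) * ((1/2) * (p 0 - c * (w/r))) by ring]
    have hid : r^2 * (p 1 - (xv 0/r)*(w/r))
        = (-(xv 1)) * (xv 0 * p 2 - xv 1 * p 1) + (-(xv 2)) * (xv 0 * p 3 - xv 2 * p 1) := by
      have e1 : r^2 * (p 1 - (xv 0/r)*(w/r)) = r^2 * p 1 - xv 0 * w := by
        field_simp
      rw [e1, ← hr2, hw_def]; ring
    have := coreA' c t r (w/r) (p 0) (xv 0) (p 1) (xv 0 * p 2 - xv 1 * p 1)
      (xv 0 * p 3 - xv 2 * p 1) (-(xv 1)) (-(xv 2)) G gN hc ht hr hSd (hp 0) hd hG0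
      hx0 hid h01 h02 (by rwa [abs_neg]) (by rwa [abs_neg]) (hp 1)
    calc |p 1 + (xv 0/(c*r)) * ((1/2) * (p 0 - c * (w/r)))| ≤ Cst c * ((jb r)⁻¹ * G)
          + Cst c * ((jb (c*t - r)/(t+r)) * gN) := this
      _ = Cst c * (jb r)⁻¹ * G + Cst c * (jb (c*t - r)/(t+r)) * gN := by ring
  · show |p 2 - (-(xv 1) / (c * r)) * ((1/2) * (p 0 - c * (w/r)))| ≤ _
    rw [show p 2 - (-(xv 1) / (c * r)) * ((1/2) * (p 0 - c * (w/r)))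
        = p 2 + (xv 1/(c*r)) * ((1/2) * (p 0 - c * (w/r))) by ring]
    have hid : r^2 * (p 2 - (xv 1/r)*(w/r))
        = (xv 0) * (xv 0 * p 2 - xv 1 * p 1) + (-(xv 2)) * (xv 1 * p 3 - xv 2 * p 2) := by
      have e1 : r^2 * (p 2 - (xv 1/r)*(w/r)) = r^2 * p 2 - xv 1 * w := by
        field_simp
      rw [e1, ← hr2, hw_def]; ring
    have := coreA' c t r (w/r) (p 0) (xv 1) (p 2) (xv 0 * p 2 - xv 1 * p 1)
      (xv 1 * p 3 - xv 2 * p 2) (xv 0) (-(xv 2)) G gN hc ht hr hSd (hp 0) hd hG0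
      hx1 hid h01 h12 hx0 (by rwa [abs_neg]) (hp 2)
    calc |p 2 + (xv 1/(c*r)) * ((1/2) * (p 0 - c * (w/r)))| ≤ Cst c * ((jb r)⁻¹ * G)
          + Cst c * ((jb (c*t - r)/(t+r)) * gN) := this
      _ = Cst c * (jb r)⁻¹ * G + Cst c * (jb (c*t - r)/(t+r)) * gN := by ring
  · show |p 3 - (-(xv 2) / (c * r)) * ((1/2) * (p 0 - c * (w/r)))| ≤ _
    rw [show p 3 - (-(xv 2) / (c * r)) * ((1/2) * (p 0 - c * (w/r)))
        = p 3 + (xv 2/(c*r)) * ((1/2) * (p 0 - c * (w/r))) by ring]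
    have hid : r^2 * (p 3 - (xv 2/r)*(w/r))
        = (xv 0) * (xv 0 * p 3 - xv 2 * p 1) + (xv 1) * (xv 1 * p 3 - xv 2 * p 2) := by
      have e1 : r^2 * (p 3 - (xv 2/r)*(w/r)) = r^2 * p 3 - xv 2 * w := by
        field_simp
      rw [e1, ← hr2, hw_def]; ring
    have := coreA' c t r (w/r) (p 0) (xv 2) (p 3) (xv 0 * p 3 - xv 2 * p 1)
      (xv 1 * p 3 - xv 2 * p 2) (xv 0) (xv 1) G gN hc ht hr hSd (hp 0) hd hG0
      hx2 hid h02 h12 hx0 hx1 (hp 3)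
    calc |p 3 + (xv 2/(c*r)) * ((1/2) * (p 0 - c * (w/r)))| ≤ Cst c * ((jb r)⁻¹ * G)
          + Cst c * ((jb (c*t - r)/(t+r)) * gN) := this
      _ = Cst c * (jb r)⁻¹ * G + Cst c * (jb (c*t - r)/(t+r)) * gN := by ring


/-- decomposition `∂ = Y⁻D⁻ + R` with remainder bounds, from the proof of
Lemma 3.1.  With `D⁻u = (1/2)(∂_t u - c∂_r u)` and `Y⁻ = (1, -x/(cr))`, one has for `t > 0`
and `x ≠ 0`: `|∂_a u - Y⁻_a D⁻u| ≤ C⟨r⟩⁻¹|Γu| + C(⟨ct-r⟩/(t+r))|∂u|`. -/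
theorem stmt_8 (c : ℝ) (hc : 0 < c) :
    ∃ C : ℝ, 0 < C ∧
      ∀ (u : Pt → ℝ), ContDiff ℝ (⊤ : ℕ∞) u →
        ∀ (t : ℝ), 0 < t → ∀ x : Sp, x ≠ 0 → ∀ a : Fin 4,
          |pd a u (Fin.cons t x)
              - (Fin.cons 1 (fun j : Fin 3 => -(x j) / (c * rad x)) : Fin 4 → ℝ) a *
                ((1/2) * (pd 0 u (Fin.cons t x)
                  - c * ∑ j : Fin 3, (x j / rad x) * pd j.succ u (Fin.cons t x)))|
            ≤ C * (jb (rad x))⁻¹ * (∑ i : Fin 8, |Gam i u (Fin.cons t x)|)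
              + C * (jb (c * t - rad x) / (t + rad x)) * gradNorm u (Fin.cons t x) :=  by
  refine ⟨Cst c, Cst_pos hc, ?_⟩
  intro u _ t ht x hx a
  have hrpos : 0 < rad x := by
    rw [rad]
    apply Real.sqrt_pos.2
    obtain ⟨i, hi⟩ := Function.ne_iff.mp hx
    refine Finset.sum_pos' (fun j _ => sq_nonneg _) ⟨i, Finset.mem_univ i, ?_⟩
    have := abs_pos.mpr hi
    nlinarith [sq_abs (x i)]
  have hr2 : x 0^2 + x 1^2 + x 2^2 = (rad x)^2 := by
    rw [rad, Real.sq_sqrt (Finset.sum_nonneg fun j _ => sq_nonneg _), Fin.sum_univ_three]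
  have hGi : ∀ i : Fin 8, |Gam i u (Fin.cons t x)| ≤ ∑ i : Fin 8, |Gam i u (Fin.cons t x)| :=
    fun i => Finset.single_le_sum (f := fun i => |Gam i u (Fin.cons t x)|)
      (fun j _ => abs_nonneg _) (Finset.mem_univ i)
  have hG0 : 0 ≤ ∑ i : Fin 8, |Gam i u (Fin.cons t x)| := (abs_nonneg _).trans (hGi 0)
  have hpa : ∀ b : Fin 4, |pd b u (Fin.cons t x)| ≤ gradNorm u (Fin.cons t x) := by
    intro b
    have h1 : (pd b u (Fin.cons t x))^2 ≤ ∑ a, (pd a u (Fin.cons t x))^2 :=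
      Finset.single_le_sum (f := fun a => (pd a u (Fin.cons t x))^2)
        (fun a _ => sq_nonneg _) (Finset.mem_univ b)
    have h2 := Real.sqrt_le_sqrt h1
    rwa [Real.sqrt_sq_eq_abs] at h2
  have hgN_sq : (gradNorm u (Fin.cons t x))^2 = ∑ a, (pd a u (Fin.cons t x))^2 :=
    Real.sq_sqrt (Finset.sum_nonneg fun _ _ => sq_nonneg _)
  have hsq : (pd 1 u (Fin.cons t x))^2 + (pd 2 u (Fin.cons t x))^2 + (pd 3 u (Fin.cons t x))^2
      ≤ (gradNorm u (Fin.cons t x))^2 := by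
    rw [hgN_sq, Fin.sum_univ_four]
    have := sq_nonneg (pd 0 u (Fin.cons t x))
    linarith
  have h7 : Gam 7 u (Fin.cons t x) = t * pd 0 u (Fin.cons t x) +
      (x 0 * pd 1 u (Fin.cons t x) + x 1 * pd 2 u (Fin.cons t x)
        + x 2 * pd 3 u (Fin.cons t x)) := by
    have e : Gam 7 u (Fin.cons t x)
        = ∑ a, (Fin.cons t x : Pt) a * pd a u (Fin.cons t x) := rfl
    rw [e, Fin.sum_univ_four,
      show (Fin.cons t x : Pt) 0 = t from rfl, show (Fin.cons t x : Pt) 1 = x 0 from rfl,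
      show (Fin.cons t x : Pt) 2 = x 1 from rfl, show (Fin.cons t x : Pt) 3 = x 2 from rfl]
    ring
  have hS : |t * pd 0 u (Fin.cons t x) + (x 0 * pd 1 u (Fin.cons t x)
      + x 1 * pd 2 u (Fin.cons t x) + x 2 * pd 3 u (Fin.cons t x))|
      ≤ ∑ i : Fin 8, |Gam i u (Fin.cons t x)| := by
    rw [← h7]; exact hGi 7
  have h01 : |x 0 * pd 2 u (Fin.cons t x) - x 1 * pd 1 u (Fin.cons t x)|
      ≤ ∑ i : Fin 8, |Gam i u (Fin.cons t x)| := by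
    rw [show x 0 * pd 2 u (Fin.cons t x) - x 1 * pd 1 u (Fin.cons t x)
        = Gam 4 u (Fin.cons t x) from rfl]
    exact hGi 4
  have h02 : |x 0 * pd 3 u (Fin.cons t x) - x 2 * pd 1 u (Fin.cons t x)|
      ≤ ∑ i : Fin 8, |Gam i u (Fin.cons t x)| := by
    rw [show x 0 * pd 3 u (Fin.cons t x) - x 2 * pd 1 u (Fin.cons t x)
        = Gam 5 u (Fin.cons t x) from rfl]
    exact hGi 5
  have h12 : |x 1 * pd 3 u (Fin.cons t x) - x 2 * pd 2 u (Fin.cons t x)|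
      ≤ ∑ i : Fin 8, |Gam i u (Fin.cons t x)| := by
    rw [show x 1 * pd 3 u (Fin.cons t x) - x 2 * pd 2 u (Fin.cons t x)
        = Gam 6 u (Fin.cons t x) from rfl]
    exact hGi 6
  exact bridge c t (rad x) x (fun b => pd b u (Fin.cons t x))
    (∑ i : Fin 8, |Gam i u (Fin.cons t x)|) (gradNorm u (Fin.cons t x))
    hc ht hrpos hr2 hS h01 h02 h12 hG0 hpa hsq a
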